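/- arXiv:1902.04537 — 4 statements merged into one kernel-verified Lean document; each statement's English description precedes it below -/
import Mathlib

section
/- Symmetry: Let b ∈ (0,1), and suppose g ∈ V⁰₊(ℝ) is even, i.e., g(x) = g(−x) for all x ∈ ℝ. Let z : [0,1] → ℂ be measurable. Then h_z is even (h_z(x) = h_z(−x) for a.e. x ∈ ℝ) if and only if z is antisymmetric around x = 1/2, i.e., z(x) = −z(1−x) for a.e. x ∈ [0,1/2]. -/
open MeasureTheory Filter Topology Set

noncomputable section

attribute [local instance] Classical.propDecidable

/-- `kmax b` is the largest nonnegative integer strictly smaller than `b/(1-b)`. -/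
def kmax (b : ℝ) : ℕ := ⌈b / (1 - b)⌉₊ - 1

/-- The window class `V⁺ⁿ(ℝ)`: `Cⁿ` functions with support exactly `[-1,1]`,
nonvanishing on `(-1,1)`. -/
def Vplus (n : ℕ) (g : ℝ → ℂ) : Prop :=
  ContDiff ℝ n g ∧ tsupport g = Set.Icc (-1 : ℝ) 1 ∧ ∀ x ∈ Set.Ioo (-1 : ℝ) 1, g x ≠ 0

/-- The `1`-periodic function `ψ(x) = 1 / ∑ₙ g(x+n)`. -/
def psiFun (g : ℝ → ℂ) (x : ℝ) : ℂ := 1 / ∑' n : ℤ, g (x + n)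

/-- The auxiliary function `γ_k` (translated so that it is defined near `[k/b, k+1]`). -/
def gammaAux (b : ℝ) (g z : ℝ → ℂ) (k : ℕ) (x : ℝ) : ℂ :=
  (-1 : ℂ) ^ k *
    (∏ j ∈ Finset.Icc 1 k,
      g (x - k - 1 - j * (1 / b - 1)) / g (x - k - j * (1 / b - 1))) *
    (g (x - k - 1) * z (x - k) + (b : ℂ) * psiFun g (x - k))

/-- The auxiliary function `η_k` (translated so that it is defined near `[-k-1, -k/b]`). -/
def etaAux (b : ℝ) (g z : ℝ → ℂ) (k : ℕ) (x : ℝ) : ℂ :=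
  (-1 : ℂ) ^ k *
    (∏ j ∈ Finset.Icc 1 k,
      g (x + k + 1 + j * (1 / b - 1)) / g (x + k + j * (1 / b - 1))) *
    (-(g (x + k + 1) * z (x + k + 1)) + (b : ℂ) * psiFun g (x + k + 1))

/-- The dual window candidate `h_z`, defined piecewise (the pieces are pairwise disjoint). -/
def hz (b : ℝ) (g z : ℝ → ℂ) (x : ℝ) : ℂ :=
  (starRingEnd ℂ)
    (if x ∈ Set.Ico (-1 : ℝ) 0 then etaAux b g z 0 x
     else if x ∈ Set.Icc (0 : ℝ) 1 then gammaAux b g z 0 x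
     else if hk : ∃ k : ℕ, 1 ≤ k ∧ k ≤ kmax b ∧ x ∈ Set.Icc ((k : ℝ) / b) ((k : ℝ) + 1) then
       gammaAux b g z hk.choose x
     else if hk : ∃ k : ℕ, 1 ≤ k ∧ k ≤ kmax b ∧ x ∈ Set.Icc (-(k : ℝ) - 1) (-(k : ℝ) / b) then
       etaAux b g z hk.choose x
     else 0)

/-- The time–frequency shift `M_{bm} T_k w`. -/
def timeFreqShift (b : ℝ) (m k : ℤ) (w : ℝ → ℂ) : ℝ → ℂ :=
  fun x => Complex.exp (2 * Real.pi * Complex.I * (b : ℂ) * (m : ℂ) * (x : ℂ)) * w (x - k)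

/-- The Gabor coefficient `⟨f, M_{bm} T_k w⟩` in `L²(ℝ)`. -/
def gaborCoef (b : ℝ) (w f : ℝ → ℂ) (m k : ℤ) : ℂ :=
  ∫ x : ℝ, f x * (starRingEnd ℂ) (timeFreqShift b m k w x)

/-- The Gabor system `G(w,1,b)` is a Bessel system. -/
def GaborBessel (b : ℝ) (w : ℝ → ℂ) : Prop :=
  MemLp w 2 (volume : Measure ℝ) ∧
  ∃ B > (0 : ℝ), ∀ f : ℝ → ℂ, MemLp f 2 (volume : Measure ℝ) →
    ∑' mk : ℤ × ℤ, ‖gaborCoef b w f mk.1 mk.2‖ ^ 2 ≤ B * ∫ x : ℝ, ‖f x‖ ^ 2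

/-- `G(g,1,b)` and `G(h,1,b)` are dual frames: both Bessel, and every `f ∈ L²(ℝ)` has the
reconstruction `f = ∑_{m,k} ⟨f, M_{bm}T_k g⟩ M_{bm}T_k h` with unconditional `L²`-convergence. -/
def GaborDualFrames (b : ℝ) (g h : ℝ → ℂ) : Prop :=
  GaborBessel b g ∧ GaborBessel b h ∧
  ∀ f : Lp ℂ 2 (volume : Measure ℝ),
    ∃ F : ℤ × ℤ → Lp ℂ 2 (volume : Measure ℝ),
      (∀ mk : ℤ × ℤ, (F mk : ℝ → ℂ) =ᵐ[volume]
        fun x => gaborCoef b g (f : ℝ → ℂ) mk.1 mk.2 * timeFreqShift b mk.1 mk.2 h x) ∧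
      HasSum F f

/-- `F` has a simple discontinuity at `x₀`: both one-sided limits exist but differ. -/
def SimpleDiscontAt (F : ℝ → ℂ) (x₀ : ℝ) : Prop :=
  ∃ l r : ℂ, Tendsto F (𝓝[<] x₀) (𝓝 l) ∧ Tendsto F (𝓝[>] x₀) (𝓝 r) ∧ l ≠ r

/-- `f` is piecewise `C^{n+1}` with seam points contained in the finite set `s`:
`f` is `C^{n+1}` off `s`, and at each point of `s` the one-sided limits of the
`(n+1)`-st derivative exist. -/
def PiecewiseCn1 (n : ℕ) (f : ℝ → ℂ) (s : Finset ℝ) : Prop :=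
  (∀ y : ℝ, y ∉ s → ContDiffAt ℝ (n + 1) f y) ∧
  ∀ y ∈ s, (∃ l, Tendsto (iteratedDeriv (n + 1) f) (𝓝[<] y) (𝓝 l)) ∧
           (∃ r, Tendsto (iteratedDeriv (n + 1) f) (𝓝[>] y) (𝓝 r))

/-!
For even `g` the function `ψ` is even and `1`-periodic, so the reflection `x ↦ -x` carries every
piece `γ_k` of `h_z` to the matching piece `η_k`, up to the term
`±(∏ …) g(x-k-1) (z(x-k) + z(1-(x-k)))`. On the piece of index `k`, a non-integer `x` has `x - k ∈ (0,1)`, so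
`h_z` is even there as soon as `z` is antisymmetric about `1/2`; conversely on `(0,1)` the factor
`g(x-1)` does not vanish. Translations and `t ↦ 1 - t` preserve Lebesgue-null sets, which
transfers this pointwise equivalence to the almost-everywhere statements.
-/

section Symmetry

variable {b : ℝ} {g z : ℝ → ℂ} {x : ℝ}

lemma psiFun_add_intCast (g : ℝ → ℂ) (x : ℝ) (n : ℤ) : psiFun g (x + n) = psiFun g x := by
  unfold psiFun
  congr 1
  calc ∑' m : ℤ, g (x + n + m) = ∑' m : ℤ, g (x + ((n + m : ℤ) : ℝ)) := by
        refine tsum_congr fun m => ?_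
        push_cast
        ring_nf
    _ = ∑' m : ℤ, g (x + m) := (Equiv.addLeft n).tsum_eq fun m : ℤ => g (x + m)

lemma psiFun_neg (hg : ∀ x, g x = g (-x)) (x : ℝ) : psiFun g (-x) = psiFun g x := by
  unfold psiFun
  congr 1
  calc ∑' m : ℤ, g (-x + m) = ∑' m : ℤ, g (x + ((-m : ℤ) : ℝ)) := by
        refine tsum_congr fun m => ?_
        rw [hg]
        push_cast
        ring_nf
    _ = ∑' m : ℤ, g (x + m) := (Equiv.neg ℤ).tsum_eq fun m : ℤ => g (x + m)

lemma gammaAux_sub_etaAux_neg (hg : ∀ x, g x = g (-x)) (k : ℕ) (x : ℝ) :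
    gammaAux b g z k x - etaAux b g z k (-x) =
      (-1) ^ k * (∏ j ∈ Finset.Icc 1 k,
        g (x - k - 1 - j * (1 / b - 1)) / g (x - k - j * (1 / b - 1))) *
        g (x - k - 1) * (z (x - k) + z (1 - (x - k))) := by
  have hψ : psiFun g (-x + k + 1) = psiFun g (x - k) := by
    rw [show -x + k + 1 = -(x - k) + ((1 : ℤ) : ℝ) by push_cast; ring, psiFun_add_intCast,
      psiFun_neg hg]
  have hprod : (∏ j ∈ Finset.Icc 1 k,
        g (-x + k + 1 + j * (1 / b - 1)) / g (-x + k + j * (1 / b - 1))) =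
      ∏ j ∈ Finset.Icc 1 k, g (x - k - 1 - j * (1 / b - 1)) / g (x - k - j * (1 / b - 1)) := by
    refine Finset.prod_congr rfl fun j _ => ?_
    rw [hg (x - k - 1 - _), hg (x - k - _)]
    ring_nf
  have hg1 : g (-x + k + 1) = g (x - k - 1) := by rw [hg (x - k - 1)]; ring_nf
  simp only [gammaAux, etaAux]
  rw [hprod, hψ, hg1, show -x + k + 1 = 1 - (x - k) by ring]
  ring

lemma gammaAux_eq_etaAux_neg (hg : ∀ x, g x = g (-x)) {k : ℕ}
    (hzx : z (x - k) = -z (1 - (x - k))) : gammaAux b g z k x = etaAux b g z k (-x) := by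
  rw [← sub_eq_zero, gammaAux_sub_etaAux_neg hg, hzx, neg_add_cancel, mul_zero]

lemma hz_of_mem_Icc_zero_one (hx : x ∈ Icc 0 1) :
    hz b g z x = starRingEnd ℂ (gammaAux b g z 0 x) := by
  rw [hz, if_neg fun h => (h.2.trans_le hx.1).false, if_pos hx]

lemma hz_neg_of_mem_Ioc_zero_one (hx : x ∈ Ioc 0 1) :
    hz b g z (-x) = starRingEnd ℂ (etaAux b g z 0 (-x)) := by
  rw [hz, if_pos ⟨neg_le_neg hx.2, neg_neg_of_pos hx.1⟩]

lemma neg_mem_Icc_neg_iff (b x : ℝ) (k : ℕ) :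
    -x ∈ Icc (-(k : ℝ) - 1) (-(k : ℝ) / b) ↔ x ∈ Icc ((k : ℝ) / b) (k + 1) := by
  rw [Set.neg_mem_Icc_iff, neg_div, neg_neg, neg_sub, sub_neg_eq_add, add_comm]

lemma hz_of_one_lt (hb : 0 < b) (hx : 1 < x) :
    hz b g z x = starRingEnd ℂ
      (if h : ∃ k : ℕ, 1 ≤ k ∧ k ≤ kmax b ∧ x ∈ Icc ((k : ℝ) / b) (k + 1) then
        gammaAux b g z h.choose x else 0) := by
  rw [hz, if_neg fun h => by linarith [h.2], if_neg fun h => by linarith [h.2]]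
  congr 1
  refine dite_congr rfl (fun _ => rfl) fun _ => dif_neg ?_
  rintro ⟨k, -, -, hxk⟩
  rw [neg_div] at hxk
  linarith [hxk.2, div_nonneg k.cast_nonneg hb.le]

lemma hz_neg_of_one_lt (hb : 0 < b) (hx : 1 < x) :
    hz b g z (-x) = starRingEnd ℂ
      (if h : ∃ k : ℕ, 1 ≤ k ∧ k ≤ kmax b ∧ x ∈ Icc ((k : ℝ) / b) (k + 1) then
        etaAux b g z h.choose (-x) else 0) := by
  rw [hz, if_neg fun h => by linarith [h.1], if_neg fun h => by linarith [h.1], dif_neg]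
  · simp only [neg_mem_Icc_neg_iff]
  · rintro ⟨k, -, -, hxk⟩
    linarith [hxk.1, div_nonneg k.cast_nonneg hb.le]

lemma hz_neg_eq_of_pos (hb : b ∈ Ioo 0 1) (hg : ∀ x, g x = g (-x)) (hx : 0 < x)
    (hxZ : x ∉ range ((↑) : ℤ → ℝ))
    (hzx : ∀ n : ℤ, x - n ∈ Ioo 0 1 → z (x - n) = -z (1 - (x - n))) :
    hz b g z (-x) = hz b g z x := by
  rcases lt_trichotomy x 1 with hx1 | rfl | hx1
  · rw [hz_neg_of_mem_Ioc_zero_one ⟨hx, hx1.le⟩, hz_of_mem_Icc_zero_one ⟨hx.le, hx1.le⟩,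
      gammaAux_eq_etaAux_neg hg (by simpa using hzx 0 (by simpa using ⟨hx, hx1⟩))]
  · exact absurd ⟨1, Int.cast_one⟩ hxZ
  · rw [hz_neg_of_one_lt hb.1 hx1, hz_of_one_lt hb.1 hx1]
    congr 1
    refine dite_congr rfl (fun h => ?_) fun _ => rfl
    obtain ⟨hk1, -, hxk⟩ := h.choose_spec
    set k := h.choose
    -- `k < k / b ≤ x ≤ k + 1` and `x` is not an integer, so `k = ⌊x⌋`
    have hkx : (k : ℝ) < x := by
      refine lt_of_lt_of_le ?_ hxk.1
      rw [lt_div_iff₀ hb.1]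
      nlinarith [hb.2, (Nat.one_le_cast (α := ℝ)).2 hk1]
    have hxk1 : x < k + 1 :=
      lt_of_le_of_ne hxk.2 fun h' => hxZ ⟨k + 1, by push_cast; exact h'.symm⟩
    exact (gammaAux_eq_etaAux_neg hg (by exact_mod_cast hzx k ⟨by push_cast; linarith, by push_cast; linarith⟩)).symm

lemma hz_neg_eq (hb : b ∈ Ioo 0 1) (hg : ∀ x, g x = g (-x)) (hxZ : x ∉ range ((↑) : ℤ → ℝ))
    (hzx : ∀ n : ℤ, x - n ∈ Ioo 0 1 → z (x - n) = -z (1 - (x - n))) :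
    hz b g z (-x) = hz b g z x := by
  rcases lt_or_gt_of_ne fun h : x = 0 => hxZ ⟨0, by rw [h, Int.cast_zero]⟩ with hx | hx
  · -- the translate `-x - n` of `-x` is the reflection `1 - (x - (-n - 1))` of a translate of `x`
    have hzx' : ∀ n : ℤ, -x - n ∈ Ioo 0 1 → z (-x - n) = -z (1 - (-x - n)) := by
      intro n hn
      have h := hzx (-n - 1) (by push_cast; constructor <;> linarith [hn.1, hn.2])
      push_cast at h
      rw [show x - (-n - 1) = 1 - (-x - n) by ring, show 1 - (1 - (-x - n)) = -x - n by ring] at h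
      rw [h, neg_neg]
    have hxZ' : -x ∉ range ((↑) : ℤ → ℝ) := fun ⟨n, hn⟩ => hxZ ⟨-n, by push_cast; linarith⟩
    rw [← hz_neg_eq_of_pos hb hg (neg_pos.2 hx) hxZ' hzx', neg_neg]
  · exact hz_neg_eq_of_pos hb hg hx hxZ hzx

lemma antisymm_of_hz_eq_neg (hg0 : ∀ x ∈ Ioo (-1 : ℝ) 1, g x ≠ 0) (hg : ∀ x, g x = g (-x))
    (hx : x ∈ Ioo 0 1) (h : hz b g z x = hz b g z (-x)) : z x = -z (1 - x) := by
  rw [hz_of_mem_Icc_zero_one (Ioo_subset_Icc_self hx),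
    hz_neg_of_mem_Ioc_zero_one (Ioo_subset_Ioc_self hx)] at h
  have hdiff := gammaAux_sub_etaAux_neg (b := b) (z := z) hg 0 x
  rw [(starRingEnd ℂ).injective h, sub_self] at hdiff
  simp only [pow_zero, Finset.Icc_eq_empty_of_lt zero_lt_one, Finset.prod_empty, one_mul,
    Nat.cast_zero, sub_zero, zero_eq_mul] at hdiff
  exact eq_neg_of_add_eq_zero_left
    (hdiff.resolve_left (hg0 _ ⟨by linarith [hx.1], by linarith [hx.2]⟩))

lemma ae_antisymm_translates
    (h : ∀ᵐ x ∂(volume.restrict (Icc (0 : ℝ) (1 / 2))), z x = -z (1 - x)) :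
    ∀ᵐ x : ℝ, ∀ n : ℤ, x - n ∈ Ioo 0 1 → z (x - n) = -z (1 - (x - n)) := by
  have hhalf : ∀ᵐ t : ℝ, t ∈ Icc 0 (1 / 2) → z t = -z (1 - t) :=
    (ae_restrict_iff' measurableSet_Icc).1 h
  have hrefl : ∀ᵐ t : ℝ, 1 - t ∈ Icc 0 (1 / 2) → z (1 - t) = -z (1 - (1 - t)) :=
    (Measure.measurePreserving_sub_left volume 1).quasiMeasurePreserving.ae hhalf
  have hunit : ∀ᵐ t : ℝ, t ∈ Ioo 0 1 → z t = -z (1 - t) := by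
    filter_upwards [hhalf, hrefl] with t h1 h2 ht
    rcases le_total t (1 / 2) with h | h
    · exact h1 ⟨ht.1.le, h⟩
    · rw [h2 ⟨by linarith [ht.2], by linarith⟩, sub_sub_cancel, neg_neg]
  rw [ae_all_iff]
  exact fun n => (measurePreserving_sub_right volume (n : ℝ)).quasiMeasurePreserving.ae hunit

end Symmetry

theorem statement4_general (b : ℝ) (hb : b ∈ Set.Ioo (0 : ℝ) 1) (g : ℝ → ℂ) (hg : Vplus 0 g)
    (hgeven : ∀ x : ℝ, g x = g (-x)) (z : ℝ → ℂ) :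
    (∀ᵐ x : ℝ, hz b g z x = hz b g z (-x)) ↔
      (∀ᵐ x ∂((volume : Measure ℝ).restrict (Set.Icc (0 : ℝ) (1 / 2))),
        z x = -z (1 - x)) := by
  constructor
  · intro h
    rw [ae_restrict_iff' measurableSet_Icc]
    filter_upwards [h, (countable_singleton (0 : ℝ)).ae_notMem volume] with x hx hx0 hmem
    exact antisymm_of_hz_eq_neg hg.2.2 hgeven ⟨lt_of_le_of_ne hmem.1 (Ne.symm hx0),
      by linarith [hmem.2]⟩ hx
  · intro h
    filter_upwards [ae_antisymm_translates h, (countable_range ((↑) : ℤ → ℝ)).ae_notMem volume]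
      with x hzx hxZ
    exact (hz_neg_eq hb hgeven hxZ hzx).symm

/-- **Symmetry.** For even `g`, `h_z` is even a.e. iff `z` is antisymmetric
around `1/2` a.e. on `[0,1/2]`. -/
theorem statement4 (b : ℝ) (hb : b ∈ Set.Ioo (0 : ℝ) 1) (g : ℝ → ℂ) (hg : Vplus 0 g)
    (hgeven : ∀ x : ℝ, g x = g (-x)) (z : ℝ → ℂ) (hzmeas : Measurable z) :
    (∀ᵐ x : ℝ, hz b g z x = hz b g z (-x)) ↔
      (∀ᵐ x ∂((volume : Measure ℝ).restrict (Set.Icc (0 : ℝ) (1 / 2))),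
        z x = -z (1 - x)) :=
  statement4_general b hb g hg hgeven z

end
end

section
/- Let n ∈ ℤ>0 and suppose g ∈ V^n₊(ℝ) satisfies g⁽ᵐ⁾(0) = 0 for m = 1,…,n. If h ∈ Cⁿ(ℝ) and b ∈ ℂ satisfy the window condition ∑_{m∈ℤ} g(x+m)·conj(h(x+m)) = b for all x ∈ ℝ, then h⁽ᵐ⁾(0) = 0 for m = 1,…,n. -/
open MeasureTheory Filter Topology Set

noncomputable section

attribute [local instance] Classical.propDecidable

/-!
Put `F = g · conj h`, a `Cⁿ` function supported in `[-1, 1]`. On `(-1, 1)` the window condition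
reads `F (x - 1) + F x + F (x + 1) = b`; differentiating `m` times at `0` and using that
`F⁽ᵐ⁾(±1) = 0` (as `F` vanishes beyond `±1`) gives `F⁽ᵐ⁾(0) = 0`. Since `g⁽ʲ⁾(0) = 0` for
`1 ≤ j ≤ m`, Leibniz' rule reduces this to `g 0 · conj (h⁽ᵐ⁾(0)) = 0`, and `g 0 ≠ 0`.
-/

section IteratedDeriv

variable {𝕜 : Type*} [NontriviallyNormedField 𝕜] {F : Type*} [NormedAddCommGroup F]
  [NormedSpace 𝕜 F]

theorem iteratedDeriv_star [StarRing 𝕜] [TrivialStar 𝕜] [StarAddMonoid F] [StarModule 𝕜 F]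
    [ContinuousStar F] (m : ℕ) (f : 𝕜 → F) :
    iteratedDeriv m (fun x => star (f x)) = fun x => star (iteratedDeriv m f x) := by
  induction m with
  | zero => simp
  | succ k ih => simp only [iteratedDeriv_succ, ih, deriv.star']

theorem iteratedDeriv_eq_zero_of_eqOn_zero {n m : ℕ} {f : 𝕜 → F} (hf : ContDiff 𝕜 n f)
    (hm : m ≤ n) {s : Set 𝕜} (hs : IsOpen s) (hfs : EqOn f 0 s) {x : 𝕜} (hx : x ∈ closure s) :
    iteratedDeriv m f x = 0 := by
  have hzero : EqOn (iteratedDeriv m f) 0 s := fun y hy => by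
    simpa [iteratedDeriv_const] using hfs.iteratedDeriv_of_isOpen hs m hy
  have hclosed : IsClosed {y | iteratedDeriv m f y = 0} :=
    isClosed_eq (hf.continuous_iteratedDeriv m (by exact_mod_cast hm)) continuous_const
  exact closure_minimal hzero hclosed hx

theorem iteratedDeriv_mul_of_iteratedDeriv_eq_zero {𝔸 : Type*} [NormedRing 𝔸] [NormedAlgebra 𝕜 𝔸]
    {m : ℕ} {f g : 𝕜 → 𝔸} {x : 𝕜} (hf : ContDiffAt 𝕜 m f x) (hg : ContDiffAt 𝕜 m g x)
    (hf0 : ∀ j, 1 ≤ j → j ≤ m → iteratedDeriv j f x = 0) :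
    iteratedDeriv m (fun y => f y * g y) x = f x * iteratedDeriv m g x := by
  rw [iteratedDeriv_fun_mul hf hg, Finset.sum_range_succ']
  have hvanish : ∀ j ∈ Finset.range m,
      (m.choose (j + 1) : 𝔸) * iteratedDeriv (j + 1) f x * iteratedDeriv (m - (j + 1)) g x = 0 :=
    fun j hj => by rw [hf0 (j + 1) le_add_self (Finset.mem_range.mp hj)]; simp
  simp [Finset.sum_eq_zero hvanish]

end IteratedDeriv

section Periodization

variable {E : Type*} [NormedAddCommGroup E]

theorem tsum_int_translate_eq_of_mem_Ioo {F : ℝ → E} (hF : ∀ y ∉ Icc (-1 : ℝ) 1, F y = 0)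
    {x : ℝ} (hx : x ∈ Ioo (-1 : ℝ) 1) :
    ∑' k : ℤ, F (x + k) = F (x - 1) + F x + F (x + 1) := by
  rw [tsum_eq_sum (s := {-1, 0, 1})]
  · simp [sub_eq_add_neg, add_assoc]
  · intro k hk
    have hk2 : (k : ℝ) ≤ -2 ∨ 2 ≤ (k : ℝ) := by
      simp only [Finset.mem_insert, Finset.mem_singleton, not_or] at hk
      have : k ≤ -2 ∨ 2 ≤ k := by omega
      exact_mod_cast this
    refine hF _ fun hmem => ?_
    rcases hk2 with hk2 | hk2
    · linarith [hmem.1, hx.2]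
    · linarith [hmem.2, hx.1]

variable [NormedSpace ℝ E]

theorem iteratedDeriv_at_zero_eq_zero_of_tsum_int_translate_eq_const {n m : ℕ} {F : ℝ → E}
    (hF : ContDiff ℝ n F) (hsupp : ∀ y ∉ Icc (-1 : ℝ) 1, F y = 0) {b : E}
    (hper : ∀ x : ℝ, ∑' k : ℤ, F (x + k) = b) (hm1 : 1 ≤ m) (hmn : m ≤ n) :
    iteratedDeriv m F 0 = 0 := by
  have hloc : (fun x => F (x - 1) + F x + F (x + 1)) =ᶠ[𝓝 0] fun _ => b := by
    filter_upwards [Ioo_mem_nhds (show (-1 : ℝ) < 0 by norm_num) one_pos] with x hx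
    rw [← tsum_int_translate_eq_of_mem_Ioo hsupp hx, hper]
  have hFm : ContDiff ℝ m F := hF.of_le (by exact_mod_cast hmn)
  have hsum := hloc.iteratedDeriv_eq m
  rw [iteratedDeriv_fun_add (by fun_prop) (by fun_prop), iteratedDeriv_fun_add (by fun_prop)
    (by fun_prop), iteratedDeriv_comp_sub_const, iteratedDeriv_comp_add_const,
    iteratedDeriv_const, if_neg (by omega)] at hsum
  have hleft : iteratedDeriv m F (-1) = 0 := by
    refine iteratedDeriv_eq_zero_of_eqOn_zero hF hmn (isOpen_Iio (a := -1))
      (fun y hy => hsupp y fun hmem => ?_) (by rw [closure_Iio]; norm_num)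
    linarith [hmem.1, mem_Iio.mp hy]
  have hright : iteratedDeriv m F 1 = 0 := by
    refine iteratedDeriv_eq_zero_of_eqOn_zero hF hmn (isOpen_Ioi (a := 1))
      (fun y hy => hsupp y fun hmem => ?_) (by rw [closure_Ioi]; norm_num)
    linarith [hmem.2, mem_Ioi.mp hy]
  simpa [hleft, hright] using hsum

end Periodization

theorem statement10_general (n : ℕ) (g : ℝ → ℂ) (hg : Vplus n g)
    (hg0 : ∀ m : ℕ, 1 ≤ m → m ≤ n → iteratedDeriv m g 0 = 0)
    (h : ℝ → ℂ) (hh : ContDiff ℝ n h) (b : ℂ)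
    (hwin : ∀ x : ℝ, ∑' m : ℤ, g (x + (m : ℝ)) * (starRingEnd ℂ) (h (x + (m : ℝ))) = b) :
    ∀ m : ℕ, 1 ≤ m → m ≤ n → iteratedDeriv m h 0 = 0 := by
  intro m hm1 hmn
  obtain ⟨hg_smooth, hg_supp, hg_ne⟩ := hg
  have hh_star : ContDiff ℝ n fun x => star (h x) := Complex.conjCLE.contDiff.comp hh
  have hmn' : (m : WithTop ℕ∞) ≤ n := by exact_mod_cast hmn
  have hprod : iteratedDeriv m (fun x => g x * star (h x)) 0 = 0 :=
    iteratedDeriv_at_zero_eq_zero_of_tsum_int_translate_eq_const (hg_smooth.mul hh_star)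
      (fun y hy => by
        rw [image_eq_zero_of_notMem_tsupport (f := g) (by rwa [hg_supp]), zero_mul]) hwin
      hm1 hmn
  rw [iteratedDeriv_mul_of_iteratedDeriv_eq_zero (g := fun x => star (h x))
    (hg_smooth.of_le hmn').contDiffAt (hh_star.of_le hmn').contDiffAt
    (fun j hj1 hjm => hg0 j hj1 (hjm.trans hmn)),
    iteratedDeriv_star] at hprod
  simpa [hg_ne 0 (by norm_num)] using hprod

/-- If `g ∈ V^n₊(ℝ)` has `g⁽ᵐ⁾(0) = 0` for `m = 1,…,n` and `h ∈ Cⁿ(ℝ)`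
satisfies the window condition `∑ₘ g(x+m) conj(h(x+m)) = b`, then `h⁽ᵐ⁾(0) = 0` for
`m = 1,…,n`. -/
theorem statement10 (n : ℕ) (hn : 0 < n) (g : ℝ → ℂ) (hg : Vplus n g)
    (hg0 : ∀ m : ℕ, 1 ≤ m → m ≤ n → iteratedDeriv m g 0 = 0)
    (h : ℝ → ℂ) (hh : ContDiff ℝ n h) (b : ℂ)
    (hwin : ∀ x : ℝ, ∑' m : ℤ, g (x + (m : ℝ)) * (starRingEnd ℂ) (h (x + (m : ℝ))) = b) :
    ∀ m : ℕ, 1 ≤ m → m ≤ n → iteratedDeriv m h 0 = 0 :=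
  statement10_general n g hg hg0 h hh b hwin
end
end

section
/- Obstruction from the window condition: Let n ∈ ℤ≥0 and let g ∈ Cⁿ(ℝ) be a compactly supported piecewise C^{n+1}-function, and let {x₁,…,x_R} be the finite set of points where g⁽ⁿ⁺¹⁾ has a simple discontinuity. Assume h ∈ C^{n+1}(ℝ) and constants a > 0, b ∈ ℂ satisfy the window condition ∑_{m∈ℤ} g(x+am)·conj(h(x+am)) = b for all x ∈ [−a/2, a/2]. Let {t₁ ≤ ⋯ ≤ t_R} ⊂ [−a/2, a/2) be the points x₁,…,x_R reduced modulo a, and set t₀ = −a/2, t_{R+1} = a/2. Suppose that for each m = 1,…,n+1 and each r = 0,…,R the series ∑_{m'∈ℤ} Dᵐ[g(·+am')·conj(h(·+am'))] converges uniformly on [t_r, t_{r+1}]. Then for each r = 1,…,R: ∑_{s ∈ {1,…,R} : x_s − x_r ∈ aℤ} [g⁽ⁿ⁺¹⁾(x_s⁺) − g⁽ⁿ⁺¹⁾(x_s⁻)]·conj(h(x_s)) = 0. In particular, if {s : x_s − x_r ∈ aℤ} = {r}, then h(x_r) = 0. -/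
open MeasureTheory Filter Topology Set

noncomputable section

attribute [local instance] Classical.propDecidable

private lemma iteratedDeriv_zero_fun' (k : ℕ) :
    iteratedDeriv k (fun _ : ℝ => (0:ℂ)) = fun _ => 0 := by
  induction k with
  | zero => simp [iteratedDeriv_zero]
  | succ k IH =>
      rw [iteratedDeriv_succ', show deriv (fun _ : ℝ => (0:ℂ)) = fun _ => (0:ℂ) from
        funext fun x => deriv_const x 0, IH]

private lemma iteratedDeriv_const_succ' (k : ℕ) (c : ℂ) :
    iteratedDeriv (k+1) (fun _ : ℝ => c) = fun _ => 0 := by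
  rw [iteratedDeriv_succ', show deriv (fun _ : ℝ => c) = fun _ => (0:ℂ) from
    funext fun x => deriv_const x c, iteratedDeriv_zero_fun']

private lemma iteratedDerivWithin_of_isOpen' {f : ℝ → ℂ} {U : Set ℝ} (hU : IsOpen U) (j : ℕ) :
    ∀ z ∈ U, iteratedDerivWithin j f U z = iteratedDeriv j f z := by
  induction j with
  | zero => intro z _; simp [iteratedDerivWithin_zero, iteratedDeriv_zero]
  | succ j IH =>
      intro z hz
      rw [iteratedDerivWithin_succ, iteratedDeriv_succ,
        derivWithin_congr (fun y hy => IH y hy) (IH z hz), derivWithin_of_isOpen hU hz]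

private lemma diffAt_iteratedDeriv' {f : ℝ → ℂ} {U : Set ℝ} (hU : IsOpen U) {N j : ℕ}
    (hj : j < N) (hf : ContDiffOn ℝ N f U) {z : ℝ} (hz : z ∈ U) :
    DifferentiableAt ℝ (iteratedDeriv j f) z := by
  have h1 : DifferentiableWithinAt ℝ (iteratedDerivWithin j f U) U z :=
    hf.differentiableOn_iteratedDerivWithin (by exact_mod_cast hj) hU.uniqueDiffOn z hz
  have h2 : DifferentiableWithinAt ℝ (iteratedDeriv j f) U z :=
    h1.congr (fun y hy => (iteratedDerivWithin_of_isOpen' hU j y hy).symm)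
      ((iteratedDerivWithin_of_isOpen' hU j z hz).symm)
  exact h2.differentiableAt (hU.mem_nhds hz)

private lemma contAt_iteratedDeriv' {f : ℝ → ℂ} {U : Set ℝ} (hU : IsOpen U) {N : ℕ}
    (hf : ContDiffOn ℝ N f U) {z : ℝ} (hz : z ∈ U) :
    ContinuousAt (iteratedDeriv N f) z := by
  have h1 : ContinuousOn (iteratedDerivWithin N f U) U :=
    hf.continuousOn_iteratedDerivWithin le_rfl hU.uniqueDiffOn
  have h2 : ContinuousOn (iteratedDeriv N f) U :=
    h1.congr (fun y hy => (iteratedDerivWithin_of_isOpen' hU N y hy).symm)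
  exact h2.continuousAt (hU.mem_nhds hz)

private lemma leibniz_iteratedDeriv {U : Set ℝ} (hU : IsOpen U) (N : ℕ) :
    ∀ (f h : ℝ → ℂ), ContDiffOn ℝ N f U → ContDiffOn ℝ N h U → ∀ z ∈ U,
      iteratedDeriv N (fun t => f t * h t) z =
        ∑ j ∈ Finset.range (N + 1),
          (N.choose j : ℂ) * (iteratedDeriv j f z * iteratedDeriv (N - j) h z) := by
  induction N with
  | zero => intro f h _ _ z _; simp [iteratedDeriv_zero]
  | succ N IH =>
      intro f h hf hh z hz
      have hfN : ContDiffOn ℝ N f U := hf.of_le (by exact_mod_cast N.le_succ)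
      have hhN : ContDiffOn ℝ N h U := hh.of_le (by exact_mod_cast N.le_succ)
      have heq : iteratedDeriv N (fun t => f t * h t) =ᶠ[𝓝 z]
          (fun y => ∑ j ∈ Finset.range (N + 1),
            (N.choose j : ℂ) * (iteratedDeriv j f y * iteratedDeriv (N - j) h y)) := by
        filter_upwards [hU.mem_nhds hz] with y hy
        exact IH f h hfN hhN y hy
      rw [iteratedDeriv_succ, heq.deriv_eq]
      have hD : HasDerivAt (fun y => ∑ j ∈ Finset.range (N + 1),
            (N.choose j : ℂ) * (iteratedDeriv j f y * iteratedDeriv (N - j) h y))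
          (∑ j ∈ Finset.range (N + 1), (N.choose j : ℂ) *
            (iteratedDeriv (j+1) f z * iteratedDeriv (N - j) h z +
             iteratedDeriv j f z * iteratedDeriv (N - j + 1) h z)) z := by
        apply HasDerivAt.fun_sum
        intro j hj
        have hjN : j < N + 1 := Finset.mem_range.mp hj
        have hdf : HasDerivAt (iteratedDeriv j f) (iteratedDeriv (j+1) f z) z := by
          have h' := (diffAt_iteratedDeriv' hU hjN hf hz).hasDerivAt
          rwa [← iteratedDeriv_succ] at h'
        have hdh : HasDerivAt (iteratedDeriv (N - j) h) (iteratedDeriv (N - j + 1) h z) z := by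
          have h' := (diffAt_iteratedDeriv' hU (Nat.lt_succ_of_le (Nat.sub_le N j)) hh
            hz).hasDerivAt
          rwa [← iteratedDeriv_succ] at h'
        exact (hdf.mul hdh).const_mul _
      rw [hD.deriv]
      have hcomb := Finset.sum_choose_succ_mul
        (fun i k => iteratedDeriv i f z * iteratedDeriv k h z) N
      rw [show N + 1 + 1 = N + 2 from rfl, hcomb]
      simp_rw [mul_add, Finset.sum_add_distrib]
      rw [add_comm]
      congr 1
      apply Finset.sum_congr rfl
      intro j hj
      have hj' : N - j + 1 = N + 1 - j := by
        have := Finset.mem_range.mp hj; omega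
      rw [hj']

private lemma iteratedDeriv_finset_sum' {ι : Type*} {U : Set ℝ} (hU : IsOpen U) {N : ℕ}
    (s : Finset ι) (f : ι → ℝ → ℂ) {z : ℝ} (hz : z ∈ U)
    (hf : ∀ i ∈ s, ContDiffOn ℝ N (f i) U) :
    iteratedDeriv N (fun y => ∑ i ∈ s, f i y) z = ∑ i ∈ s, iteratedDeriv N (f i) z := by
  classical
  revert hf
  refine Finset.induction_on s ?_ ?_
  · intro _
    simp only [Finset.sum_empty]
    exact congrFun (iteratedDeriv_zero_fun' N) z
  · intro i s his IH hf
    have h1 : ContDiffOn ℝ N (f i) U := hf i (Finset.mem_insert_self i s)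
    have h2 : ∀ j ∈ s, ContDiffOn ℝ N (f j) U := fun j hj => hf j (Finset.mem_insert_of_mem hj)
    have hS : ContDiffOn ℝ N (fun y => ∑ j ∈ s, f j y) U := by
      apply ContDiffOn.sum
      intro j hj
      exact h2 j hj
    have key : iteratedDeriv N (fun y => f i y + ∑ j ∈ s, f j y) z
        = iteratedDeriv N (f i) z + iteratedDeriv N (fun y => ∑ j ∈ s, f j y) z := by
      have e1 := iteratedDerivWithin_add hz hU.uniqueDiffOn (h1 z hz) (hS z hz)
      have e2 : iteratedDerivWithin N (f i + fun y => ∑ j ∈ s, f j y) U z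
          = iteratedDeriv N (fun y => f i y + ∑ j ∈ s, f j y) z := by
        rw [show (f i + fun y => ∑ j ∈ s, f j y) = fun y => f i y + ∑ j ∈ s, f j y from rfl]
        exact iteratedDerivWithin_of_isOpen' hU N z hz
      rw [e2] at e1
      rw [iteratedDerivWithin_of_isOpen' hU N z hz, iteratedDerivWithin_of_isOpen' hU N z hz] at e1
      exact e1
    simp only [Finset.sum_insert his]
    rw [key, IH h2]

private lemma eventually_not_mem_finite' {A : Set ℝ} (hA : A.Finite) {t₀ : ℝ}
    {l : Filter ℝ} (hl : l ≤ 𝓝 t₀) (hne : ∀ᶠ y in l, y ≠ t₀) :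
    ∀ᶠ y in l, y ∉ A := by
  have hclosed : IsClosed (A \ {t₀}) := (hA.subset Set.diff_subset).isClosed
  have h1 : ∀ᶠ y in 𝓝 t₀, y ∉ A \ {t₀} :=
    hclosed.isOpen_compl.mem_nhds (by simp)
  filter_upwards [hl h1, hne] with y hy hyne hyA
  exact hy ⟨hyA, hyne⟩

private lemma tendsto_add_const_Iio' (c t₀ : ℝ) :
    Tendsto (fun y => y + c) (𝓝[<] t₀) (𝓝[<] (t₀ + c)) := by
  apply tendsto_nhdsWithin_of_tendsto_nhds_of_eventually_within
  · exact ((continuous_id.add continuous_const).tendsto t₀).mono_left nhdsWithin_le_nhds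
  · filter_upwards [eventually_mem_nhdsWithin] with y (hy : y < t₀)
    exact (by linarith : y + c < t₀ + c)

private lemma tendsto_add_const_Ioi' (c t₀ : ℝ) :
    Tendsto (fun y => y + c) (𝓝[>] t₀) (𝓝[>] (t₀ + c)) := by
  apply tendsto_nhdsWithin_of_tendsto_nhds_of_eventually_within
  · exact ((continuous_id.add continuous_const).tendsto t₀).mono_left nhdsWithin_le_nhds
  · filter_upwards [eventually_mem_nhdsWithin] with y (hy : t₀ < y)
    exact (by linarith : t₀ + c < y + c)

private lemma abs_sub_le'' (p q : ℝ) : |p - q| ≤ |p| + |q| := by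
  rw [sub_eq_add_neg]
  simpa [abs_neg] using abs_add_le p (-q)


/-- **Obstruction from the window condition.** Here the uniform-convergence
hypothesis is expressed (equivalently) as uniform convergence on every closed subinterval of
`[-a/2, a/2]` whose interior contains no point congruent to some `x_r` modulo `a`; these are
exactly the subintervals of the intervals `[t_r, t_{r+1}]`. -/
theorem statement13 (n : ℕ) (g h : ℝ → ℂ) (R : ℕ) (x : Fin R → ℝ)
    (hgC : ContDiff ℝ n g) (hgsupp : HasCompactSupport g)
    (hinj : Function.Injective x)
    (hpw : ∀ y : ℝ, y ∉ Set.range x → ContDiffAt ℝ (n + 1) g y)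
    (hdisc : ∀ r : Fin R, SimpleDiscontAt (iteratedDeriv (n + 1) g) (x r))
    (hh : ContDiff ℝ (n + 1) h) (a : ℝ) (ha : 0 < a) (b : ℂ)
    (hwin : ∀ y ∈ Set.Icc (-a / 2) (a / 2),
      ∑' m : ℤ, g (y + a * (m : ℝ)) * (starRingEnd ℂ) (h (y + a * (m : ℝ))) = b)
    (hunif : ∀ m : ℕ, 1 ≤ m → m ≤ n + 1 → ∀ c d : ℝ, -a / 2 ≤ c → c ≤ d → d ≤ a / 2 →
      (∀ y ∈ Set.Ioo c d, ∀ r : Fin R, ¬∃ j : ℤ, y - x r = a * (j : ℝ)) →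
      ∃ S : ℝ → ℂ, TendstoUniformlyOn
        (fun (F : Finset ℤ) y => ∑ m' ∈ F,
          iteratedDeriv m (fun t => g (t + a * (m' : ℝ)) * (starRingEnd ℂ) (h (t + a * (m' : ℝ)))) y)
        S atTop (Set.Icc c d))
    (L Rv : Fin R → ℂ)
    (hL : ∀ r : Fin R, Tendsto (iteratedDeriv (n + 1) g) (𝓝[<] (x r)) (𝓝 (L r)))
    (hR : ∀ r : Fin R, Tendsto (iteratedDeriv (n + 1) g) (𝓝[>] (x r)) (𝓝 (Rv r))) :
    ∀ r : Fin R,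
      (∑ s ∈ Finset.univ.filter (fun s : Fin R => ∃ j : ℤ, x s - x r = a * (j : ℝ)),
        (Rv s - L s) * (starRingEnd ℂ) (h (x s))) = 0 ∧
      (Finset.univ.filter (fun s : Fin R => ∃ j : ℤ, x s - x r = a * (j : ℝ)) = {r} →
        h (x r) = 0) := by

  classical
  intro r
  -- conjugated h
  set hb : ℝ → ℂ := fun z => (starRingEnd ℂ) (h z) with hhb_def
  have hhb : ContDiff ℝ (n + 1 : ℕ) hb := by
    have hconj : ContDiff ℝ (n + 1 : ℕ) (fun z : ℂ => Complex.conjCLE z) :=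
      Complex.conjCLE.contDiff
    have := hconj.comp hh
    simpa [hhb_def, Complex.conjCLE_apply, Function.comp_def] using this
  set φ : ℝ → ℂ := fun z => g z * hb z with hφdef
  set f : ℤ → ℝ → ℂ := fun m y => φ (y + a * m) with hfdef
  -- support bound
  obtain ⟨C0, hC0⟩ := (Metric.isBounded_iff_subset_closedBall 0).mp hgsupp.isBounded
  set C : ℝ := max C0 0 with hCdef
  have hCnn : (0:ℝ) ≤ C := le_max_right _ _
  have hCg : ∀ z : ℝ, C < |z| → g z = 0 := by
    intro z hz
    by_contra hgz
    have hzsupp : z ∈ tsupport g := subset_tsupport g (Function.mem_support.mpr hgz)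
    have h1 := hC0 hzsupp
    rw [Metric.mem_closedBall, Real.dist_eq, sub_zero] at h1
    have hC0le : C0 ≤ C := le_max_left _ _
    linarith
  -- derivative vanishes where |z| > C
  have hiter0 : ∀ z : ℝ, C < |z| → iteratedDeriv (n+1) g z = 0 := by
    intro z hz
    have hopen : IsOpen {w : ℝ | C < |w|} := isOpen_lt continuous_const continuous_abs
    have hev : g =ᶠ[𝓝 z] (fun _ => 0) := by
      filter_upwards [hopen.mem_nhds hz] with u hu using hCg u hu
    rw [Filter.EventuallyEq.iteratedDeriv_eq (n+1) hev]
    exact congrFun (iteratedDeriv_zero_fun' (n+1)) z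
  -- the seams lie in the support
  have hxs_bound : ∀ s : Fin R, |x s| ≤ C := by
    intro s
    by_contra hcon
    push_neg at hcon
    obtain ⟨l0, r0, hl', hr', hlr⟩ := hdisc s
    have hopen : IsOpen {w : ℝ | C < |w|} := isOpen_lt continuous_const continuous_abs
    have hev : iteratedDeriv (n+1) g =ᶠ[𝓝 (x s)] (fun _ => 0) := by
      filter_upwards [hopen.mem_nhds hcon] with u hu using hiter0 u hu
    have hzeroL : Tendsto (iteratedDeriv (n+1) g) (𝓝[<] (x s)) (𝓝 (0:ℂ)) :=
      Tendsto.congr' ((hev.filter_mono nhdsWithin_le_nhds).symm) tendsto_const_nhds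
    have hzeroR : Tendsto (iteratedDeriv (n+1) g) (𝓝[>] (x s)) (𝓝 (0:ℂ)) :=
      Tendsto.congr' ((hev.filter_mono nhdsWithin_le_nhds).symm) tendsto_const_nhds
    have e1 : l0 = 0 := tendsto_nhds_unique hl' hzeroL
    have e2 : r0 = 0 := tendsto_nhds_unique hr' hzeroR
    exact hlr (by rw [e1, e2])
  -- window condition everywhere
  have hΦ : ∀ y : ℝ, (∑' m : ℤ, f m y) = b := by
    intro y
    set k : ℤ := ⌊(y + a/2)/a⌋ with hkdef
    have hk1 : (k : ℝ) ≤ (y + a/2)/a := Int.floor_le _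
    have hk2 : (y + a/2)/a < k + 1 := Int.lt_floor_add_one _
    have hy1 : (k:ℝ) * a ≤ y + a/2 := (le_div_iff₀ ha).mp hk1
    have hy2 : y + a/2 < ((k:ℝ)+1) * a := (div_lt_iff₀ ha).mp hk2
    have hy0 : y - a * k ∈ Set.Icc (-a / 2) (a / 2) := by
      constructor
      · nlinarith
      · nlinarith
    have hre : ∀ m : ℤ, f (m + k) (y - a*k) = f m y := by
      intro m
      simp only [hfdef]
      congr 1
      push_cast
      ring
    calc (∑' m : ℤ, f m y) = ∑' m : ℤ, f (m + k) (y - a*k) := (tsum_congr hre).symm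
      _ = ∑' m : ℤ, f m (y - a*k) := (Equiv.addRight k).tsum_eq (fun m => f m (y - a*k))
      _ = b := by
          have hw := hwin (y - a*k) hy0
          simpa only [hfdef, hφdef, hhb_def] using hw
  -- choice of N
  obtain ⟨N, hN⟩ := exists_nat_gt ((C + |x r| + 1)/a)
  have haN : C + |x r| + 1 < a * N := by
    rw [div_lt_iff₀ ha] at hN
    linarith [hN, mul_comm (N:ℝ) a]
  set t : ℝ := x r with htdef
  set F : Finset ℤ := Finset.Icc (-(N:ℤ)) (N:ℤ) with hFdef
  have hvanish : ∀ m : ℤ, m ∉ F → ∀ y ∈ Set.Ioo (t-1) (t+1), g (y + a*m) = 0 := by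
    intro m hm y hy
    apply hCg
    have hmabs : (N:ℝ) + 1 ≤ |(m:ℝ)| := by
      have hmz : (N:ℤ) + 1 ≤ |m| := by
        simp only [hFdef, Finset.mem_Icc, not_and_or, not_le] at hm
        rcases hm with hm | hm
        · rw [abs_of_neg (by omega)]; omega
        · rw [abs_of_pos (by omega)]; omega
      calc (N:ℝ) + 1 = ((N + 1 : ℤ) : ℝ) := by push_cast; ring
        _ ≤ ((|m| : ℤ) : ℝ) := by exact_mod_cast hmz
        _ = |(m:ℝ)| := by push_cast [Int.cast_abs]; ring
    have hy1 : t - 1 < y := hy.1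
    have hy2 : y < t + 1 := hy.2
    have h1 : |y| ≤ |t| + 1 := by
      have : |y - t| ≤ 1 := abs_le.mpr ⟨by linarith, by linarith⟩
      calc |y| = |t + (y - t)| := by ring_nf
        _ ≤ |t| + |y - t| := abs_add_le _ _
        _ ≤ |t| + 1 := by linarith
    have h2 : a * ((N:ℝ)+1) ≤ a * |(m:ℝ)| := mul_le_mul_of_nonneg_left hmabs ha.le
    have h3 : |a * (m:ℝ)| = a * |(m:ℝ)| := by rw [abs_mul, abs_of_pos ha]
    have h4 : a * |(m:ℝ)| ≤ |y + a*m| + |y| := by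
      rw [← h3]
      calc |a * (m:ℝ)| = |(y + a*m) - y| := by ring_nf
        _ ≤ |y + a*m| + |y| := abs_sub_le'' _ _
    linarith
  -- finite-sum version of the window function
  have hΦ₀ : ∀ y ∈ Set.Ioo (t-1) (t+1), (∑ m ∈ F, f m y) = b := by
    intro y hy
    rw [← tsum_eq_sum (L := SummationFilter.unconditional ℤ) (fun m hm => by
      have hz := hvanish m hm y hy
      simp only [hfdef, hφdef]
      rw [hz, zero_mul])]
    exact hΦ y
  -- the bad set (translated seams)
  set Bad : Set ℝ := {z : ℝ | ∃ s : Fin R, ∃ m ∈ F, z = x s - a * m} with hBaddef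
  have hBadfin : Bad.Finite := by
    apply Set.Finite.subset (Set.Finite.image (fun p : Fin R × ℤ => x p.1 - a * p.2)
      (Set.finite_univ.prod F.finite_toSet))
    rintro z ⟨s, m, hm, rfl⟩
    exact ⟨(s, m), ⟨Set.mem_univ _, hm⟩, rfl⟩
  set U : Set ℝ := Set.Ioo (t-1) (t+1) \ Bad with hUdef
  have hUopen : IsOpen U := isOpen_Ioo.sdiff hBadfin.isClosed
  have hUnoseam : ∀ y ∈ U, ∀ m ∈ F, (y + a*m) ∉ Set.range x := by
    rintro y hy m hm ⟨s, hs⟩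
    exact hy.2 ⟨s, m, hm, by linarith [hs]⟩
  have hfm_cd : ∀ m ∈ F, ContDiffOn ℝ (n+1 : ℕ) (f m) U := by
    intro m hm y hy
    apply ContDiffAt.contDiffWithinAt
    have hφat : ContDiffAt ℝ (n+1:ℕ) φ (y + a*m) := by
      rw [hφdef]
      exact (hpw _ (hUnoseam y hy m hm)).mul hhb.contDiffAt
    have : ContDiffAt ℝ (n+1:ℕ) (fun y : ℝ => φ (y + a*m)) y :=
      hφat.comp y ((contDiff_id.add contDiff_const).contDiffAt)
    simpa only [hfdef] using this
  -- smoothness off the seams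
  have hUo : IsOpen ((Set.range x)ᶜ) := (Set.finite_range x).isClosed.isOpen_compl
  have hgU : ContDiffOn ℝ (n+1:ℕ) g (Set.range x)ᶜ := fun y hy => (hpw y hy).contDiffWithinAt
  have hbU : ContDiffOn ℝ (n+1:ℕ) hb (Set.range x)ᶜ := hhb.contDiffOn
  have hφU : ContDiffOn ℝ (n+1:ℕ) φ (Set.range x)ᶜ := by
    intro y hy
    rw [hφdef]
    exact ((hpw y hy).mul hhb.contDiffAt).contDiffWithinAt
  have hLeib := leibniz_iteratedDeriv hUo (n+1) g hb hgU hbU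
  -- one-sided limits of each translated term
  set ℓ : ℤ → ℂ := fun m => limUnder (𝓝[<] (t + a*m)) (iteratedDeriv (n+1) φ) with hldef
  set ρ : ℤ → ℂ := fun m => limUnder (𝓝[>] (t + a*m)) (iteratedDeriv (n+1) φ) with hrdef
  have hkey : ∀ m ∈ F,
      Tendsto (iteratedDeriv (n+1) φ) (𝓝[<] (t + a*m)) (𝓝 (ℓ m)) ∧
      Tendsto (iteratedDeriv (n+1) φ) (𝓝[>] (t + a*m)) (𝓝 (ρ m)) ∧
      ρ m - ℓ m = ∑ s ∈ Finset.univ.filter (fun s : Fin R => x s = t + a * m),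
        (Rv s - L s) * (starRingEnd ℂ) (h (x s)) := by
    intro m _
    by_cases hseam : ∃ s : Fin R, x s = t + a * m
    · obtain ⟨s, hs⟩ := hseam
      set A : ℂ := ∑ j ∈ Finset.range (n+1),
        ((n+1).choose j : ℂ) * (iteratedDeriv j g (x s) * iteratedDeriv (n+1-j) hb (x s))
        with hAdef
      have hlow : ∀ (l : Filter ℝ), l ≤ 𝓝 (x s) →
          Tendsto (fun z => ∑ j ∈ Finset.range (n+1),
            ((n+1).choose j : ℂ) * (iteratedDeriv j g z * iteratedDeriv (n+1-j) hb z)) l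
            (𝓝 A) := by
        intro l hl
        rw [hAdef]
        apply tendsto_finset_sum
        intro j hj
        have hj' : j ≤ n := Nat.lt_succ_iff.mp (Finset.mem_range.mp hj)
        have hgj : ContinuousAt (iteratedDeriv j g) (x s) :=
          (hgC.continuous_iteratedDeriv j (by exact_mod_cast hj')).continuousAt
        have hbj : ContinuousAt (iteratedDeriv (n+1-j) hb) (x s) :=
          (hhb.continuous_iteratedDeriv (n+1-j)
            (by exact_mod_cast Nat.sub_le (n+1) j)).continuousAt
        exact tendsto_const_nhds.mul
          ((hgj.tendsto.mono_left hl).mul (hbj.tendsto.mono_left hl))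
      have hevent : ∀ (l : Filter ℝ), l ≤ 𝓝 (x s) → (∀ᶠ z in l, z ≠ x s) →
          ∀ᶠ z in l, iteratedDeriv (n+1) φ z =
            (∑ j ∈ Finset.range (n+1),
              ((n+1).choose j:ℂ) * (iteratedDeriv j g z * iteratedDeriv (n+1-j) hb z))
            + iteratedDeriv (n+1) g z * hb z := by
        intro l hl hne
        filter_upwards [eventually_not_mem_finite' (Set.finite_range x) hl hne] with z hz
        have hlz := hLeib z hz
        rw [Finset.sum_range_succ] at hlz
        have hφz : iteratedDeriv (n+1) φ z = iteratedDeriv (n+1) (fun t => g t * hb t) z := by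
          rw [hφdef]
        rw [hφz, hlz]
        simp [Nat.choose_self, Nat.sub_self, iteratedDeriv_zero]
      have hneL : ∀ᶠ z in 𝓝[<] (x s), z ≠ x s := by
        filter_upwards [eventually_mem_nhdsWithin] with z (hz : z < x s) using ne_of_lt hz
      have hneR : ∀ᶠ z in 𝓝[>] (x s), z ≠ x s := by
        filter_upwards [eventually_mem_nhdsWithin] with z (hz : x s < z) using ne_of_gt hz
      have hTL : Tendsto (iteratedDeriv (n+1) φ) (𝓝[<] (x s)) (𝓝 (A + L s * hb (x s))) := by
        have hev := hevent _ nhdsWithin_le_nhds hneL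
        have hT2 := (hlow _ nhdsWithin_le_nhds).add
          ((hL s).mul ((hhb.continuous.tendsto (x s)).mono_left nhdsWithin_le_nhds))
        exact Tendsto.congr' (Filter.EventuallyEq.symm hev) hT2
      have hTR : Tendsto (iteratedDeriv (n+1) φ) (𝓝[>] (x s)) (𝓝 (A + Rv s * hb (x s))) := by
        have hev := hevent _ nhdsWithin_le_nhds hneR
        have hT2 := (hlow _ nhdsWithin_le_nhds).add
          ((hR s).mul ((hhb.continuous.tendsto (x s)).mono_left nhdsWithin_le_nhds))
        exact Tendsto.congr' (Filter.EventuallyEq.symm hev) hT2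
      have hxst : t + a*m = x s := hs.symm
      rw [hxst]
      have hlval : ℓ m = A + L s * hb (x s) := by
        rw [hldef]; simp only []
        rw [hxst]
        exact hTL.limUnder_eq
      have hrval : ρ m = A + Rv s * hb (x s) := by
        rw [hrdef]; simp only []
        rw [hxst]
        exact hTR.limUnder_eq
      have hfilter : Finset.univ.filter (fun s' : Fin R => x s' = x s) = {s} := by
        ext s'
        simp only [Finset.mem_filter, Finset.mem_univ, true_and, Finset.mem_singleton]
        exact ⟨fun hxs' => hinj hxs', fun hss => by rw [hss]⟩
      refine ⟨hlval ▸ hTL, hrval ▸ hTR, ?_⟩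
      rw [hfilter, Finset.sum_singleton, hlval, hrval]
      simp only [hhb_def]
      ring
    · have hys : (t + a*m) ∉ Set.range x := fun ⟨s, hsx⟩ => hseam ⟨s, hsx⟩
      have hcont : ContinuousAt (iteratedDeriv (n+1) φ) (t + a*m) :=
        contAt_iteratedDeriv' hUo hφU hys
      have hTL : Tendsto (iteratedDeriv (n+1) φ) (𝓝[<] (t + a*m))
          (𝓝 (iteratedDeriv (n+1) φ (t + a*m))) := hcont.tendsto.mono_left nhdsWithin_le_nhds
      have hTR : Tendsto (iteratedDeriv (n+1) φ) (𝓝[>] (t + a*m))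
          (𝓝 (iteratedDeriv (n+1) φ (t + a*m))) := hcont.tendsto.mono_left nhdsWithin_le_nhds
      have hlval : ℓ m = iteratedDeriv (n+1) φ (t + a*m) := hTL.limUnder_eq
      have hrval : ρ m = iteratedDeriv (n+1) φ (t + a*m) := hTR.limUnder_eq
      have hfilter : Finset.univ.filter (fun s' : Fin R => x s' = t + a * m) = ∅ := by
        apply Finset.filter_eq_empty_iff.mpr
        intro s' _
        exact fun hxs' => hseam ⟨s', hxs'⟩
      refine ⟨hlval ▸ hTL, hrval ▸ hTR, ?_⟩
      rw [hfilter, Finset.sum_empty, hlval, hrval, sub_self]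
  -- iterated derivative of each term as translate
  have hcomp : ∀ m : ℤ, iteratedDeriv (n+1) (f m)
      = fun y => iteratedDeriv (n+1) φ (y + a*m) := by
    intro m
    have := iteratedDeriv_comp_add_const (n+1) φ (a*m)
    simpa only [hfdef] using this
  -- the sum of translated derivatives tends to ∑ ℓ and ∑ ρ
  have hTsumL : Tendsto (fun y => ∑ m ∈ F, iteratedDeriv (n+1) (f m) y) (𝓝[<] t)
      (𝓝 (∑ m ∈ F, ℓ m)) := by
    apply tendsto_finset_sum
    intro m hm
    have h1 := (hkey m hm).1
    have h2 : Tendsto (fun y => iteratedDeriv (n+1) φ (y + a*m)) (𝓝[<] t) (𝓝 (ℓ m)) :=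
      h1.comp (tendsto_add_const_Iio' (a*m) t)
    rw [hcomp m]
    exact h2
  have hTsumR : Tendsto (fun y => ∑ m ∈ F, iteratedDeriv (n+1) (f m) y) (𝓝[>] t)
      (𝓝 (∑ m ∈ F, ρ m)) := by
    apply tendsto_finset_sum
    intro m hm
    have h1 := (hkey m hm).2.1
    have h2 : Tendsto (fun y => iteratedDeriv (n+1) φ (y + a*m)) (𝓝[>] t) (𝓝 (ρ m)) :=
      h1.comp (tendsto_add_const_Ioi' (a*m) t)
    rw [hcomp m]
    exact h2
  -- the sum is eventually zero around t
  have hsumzero : ∀ y, y ∈ Set.Ioo (t-1) (t+1) → y ∉ Bad →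
      ∑ m ∈ F, iteratedDeriv (n+1) (f m) y = 0 := by
    intro y h1 h2
    have hyU : y ∈ U := ⟨h1, h2⟩
    rw [← iteratedDeriv_finset_sum' hUopen F f hyU hfm_cd]
    have hev2 : (fun y => ∑ m ∈ F, f m y) =ᶠ[𝓝 y] (fun _ => b) := by
      filter_upwards [isOpen_Ioo.mem_nhds h1] with u hu using hΦ₀ u hu
    rw [Filter.EventuallyEq.iteratedDeriv_eq (n+1) hev2]
    exact congrFun (iteratedDeriv_const_succ' n b) y
  have htIoo : t ∈ Set.Ioo (t-1) (t+1) := by constructor <;> linarith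
  have hevL : ∀ᶠ y in 𝓝[<] t, ∑ m ∈ F, iteratedDeriv (n+1) (f m) y = 0 := by
    have hne : ∀ᶠ y in 𝓝[<] t, y ≠ t := by
      filter_upwards [eventually_mem_nhdsWithin] with z (hz : z < t) using ne_of_lt hz
    filter_upwards [eventually_not_mem_finite' hBadfin nhdsWithin_le_nhds hne,
      nhdsWithin_le_nhds (isOpen_Ioo.mem_nhds htIoo)] with y hy1 hy2
    exact hsumzero y hy2 hy1
  have hevR : ∀ᶠ y in 𝓝[>] t, ∑ m ∈ F, iteratedDeriv (n+1) (f m) y = 0 := by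
    have hne : ∀ᶠ y in 𝓝[>] t, y ≠ t := by
      filter_upwards [eventually_mem_nhdsWithin] with z (hz : t < z) using ne_of_gt hz
    filter_upwards [eventually_not_mem_finite' hBadfin nhdsWithin_le_nhds hne,
      nhdsWithin_le_nhds (isOpen_Ioo.mem_nhds htIoo)] with y hy1 hy2
    exact hsumzero y hy2 hy1
  have hsumL : (∑ m ∈ F, ℓ m) = 0 :=
    tendsto_nhds_unique hTsumL (Tendsto.congr' (Filter.EventuallyEq.symm hevL)
      tendsto_const_nhds)
  have hsumR : (∑ m ∈ F, ρ m) = 0 :=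
    tendsto_nhds_unique hTsumR (Tendsto.congr' (Filter.EventuallyEq.symm hevR)
      tendsto_const_nhds)
  -- assemble
  have hdiff : ∑ m ∈ F, (ρ m - ℓ m) = 0 := by
    rw [Finset.sum_sub_distrib, hsumR, hsumL, sub_zero]
  have hmain : (∑ s ∈ Finset.univ.filter (fun s : Fin R => ∃ j : ℤ, x s - x r = a * (j : ℝ)),
      (Rv s - L s) * (starRingEnd ℂ) (h (x s))) = 0 := by
    rw [← hdiff]
    have h1 : ∑ m ∈ F, (ρ m - ℓ m)
        = ∑ m ∈ F, ∑ s ∈ Finset.univ.filter (fun s : Fin R => x s = t + a*m),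
          (Rv s - L s) * (starRingEnd ℂ) (h (x s)) :=
      Finset.sum_congr rfl (fun m hm => (hkey m hm).2.2)
    rw [h1]
    have h2 : ∀ m : ℤ, (∑ s ∈ Finset.univ.filter (fun s : Fin R => x s = t + a*m),
        (Rv s - L s) * (starRingEnd ℂ) (h (x s)))
        = ∑ s : Fin R, if x s = t + a*m then (Rv s - L s) * (starRingEnd ℂ) (h (x s)) else 0 :=
      fun m => Finset.sum_filter _ _
    rw [Finset.sum_congr rfl (fun m _ => h2 m), Finset.sum_comm]
    have h3 : ∀ s : Fin R,
        (∑ m ∈ F, if x s = t + a*m then (Rv s - L s) * (starRingEnd ℂ) (h (x s)) else 0)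
        = if (∃ j : ℤ, x s - x r = a * (j:ℝ)) then (Rv s - L s) * (starRingEnd ℂ) (h (x s))
          else 0 := by
      intro s
      by_cases hsj : ∃ j : ℤ, x s - x r = a * (j:ℝ)
      · obtain ⟨j, hj⟩ := hsj
        have huniq : ∀ m : ℤ, (x s = t + a*m) ↔ m = j := by
          intro m
          constructor
          · intro hxm
            have hm' : a * (m:ℝ) = a * (j:ℝ) := by
              rw [← hj]
              rw [htdef] at hxm
              linarith
            have := mul_left_cancel₀ ha.ne' hm'
            exact_mod_cast this
          · rintro rfl
            rw [htdef]
            linarith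
        have hjF : j ∈ F := by
          have habs : |a * (j:ℝ)| ≤ C + |t| := by
            rw [← hj]
            calc |x s - x r| ≤ |x s| + |x r| := abs_sub_le'' _ _
              _ ≤ C + |t| := by
                  have := hxs_bound s
                  rw [htdef]
                  linarith
          have hja : a * |(j:ℝ)| ≤ C + |t| := by
            rw [← abs_of_pos ha, ← abs_mul]
            exact habs
          have hja2 : a * |(j:ℝ)| < a * N := lt_of_le_of_lt hja (by rw [htdef]; linarith)
          have hjlt : |(j:ℝ)| < (N:ℝ) := lt_of_mul_lt_mul_left hja2 ha.le
          have hjZ : |j| ≤ (N:ℤ) := by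
            have : ((|j| : ℤ) : ℝ) < (N:ℝ) := by rwa [Int.cast_abs]
            exact_mod_cast le_of_lt this
          rw [hFdef, Finset.mem_Icc]
          constructor <;> [linarith [neg_abs_le j, hjZ]; linarith [le_abs_self j, hjZ]]
        rw [if_pos ⟨j, hj⟩]
        calc (∑ m ∈ F, if x s = t + a*m then (Rv s - L s) * (starRingEnd ℂ) (h (x s)) else 0)
            = ∑ m ∈ F, if m = j then (Rv s - L s) * (starRingEnd ℂ) (h (x s)) else 0 :=
              Finset.sum_congr rfl (fun m _ => by rw [if_congr (huniq m) rfl rfl])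
          _ = (Rv s - L s) * (starRingEnd ℂ) (h (x s)) := by
              rw [Finset.sum_eq_single_of_mem j hjF (fun m _ hmj => if_neg hmj), if_pos rfl]
      · rw [if_neg hsj]
        apply Finset.sum_eq_zero
        intro m _
        rw [if_neg]
        intro hxm
        exact hsj ⟨m, by rw [htdef] at hxm; linarith⟩
    rw [Finset.sum_congr rfl (fun s _ => h3 s)]
    exact (Finset.sum_filter _ _)
  refine ⟨hmain, ?_⟩
  intro hsingle
  have h0 : (Rv r - L r) * (starRingEnd ℂ) (h (x r)) = 0 := by
    have hmain' := hmain
    rw [hsingle, Finset.sum_singleton] at hmain'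
    exact hmain'
  obtain ⟨l0, r0, hl0, hr0, hlr0⟩ := hdisc r
  have e1 : L r = l0 := tendsto_nhds_unique (hL r) hl0
  have e2 : Rv r = r0 := tendsto_nhds_unique (hR r) hr0
  have hne : Rv r - L r ≠ 0 := sub_ne_zero.mpr (by rw [e1, e2]; exact fun hc => hlr0 hc.symm)
  have hstar := (mul_eq_zero.mp h0).resolve_left hne
  rw [starRingEnd_apply] at hstar
  exact star_eq_zero.mp hstar


end
end

section
/- Small support, part (a): Let n ∈ ℤ≥0, let N ∈ ℤ>0, let b ∈ [N/(N+1), 2N/(2N+1)), and let g ∈ V^n₊(ℝ). Define z : [0,1] → ℂ by z(x) = b·ψ(x)/g(x) for x ∈ [0, 1−N(1/b−1)], z(x) = z_mid(x) for x ∈ (1−N(1/b−1), N(1/b−1)), and z(x) = −b·ψ(x)/g(x−1) for x ∈ [N(1/b−1), 1], where z_mid : (1−N(1/b−1), N(1/b−1)) → ℂ is an arbitrary measurable function. Then the dual window h_z has compact support contained in [−N, N]. -/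
open MeasureTheory Filter Topology Set

noncomputable section

attribute [local instance] Classical.propDecidable

theorem gammaAux_eq_zero {b : ℝ} {g z : ℝ → ℂ} {k : ℕ} {x : ℝ} (hg : g (x - k - 1) ≠ 0)
    (hz : z (x - k) = -((b : ℂ) * psiFun g (x - k) / g (x - k - 1))) :
    gammaAux b g z k x = 0 := by
  have hfactor : g (x - k - 1) * z (x - k) + (b : ℂ) * psiFun g (x - k) = 0 := by
    rw [hz]; field_simp; ring
  rw [gammaAux, hfactor, mul_zero]

theorem etaAux_eq_zero {b : ℝ} {g z : ℝ → ℂ} {k : ℕ} {x : ℝ} (hg : g (x + k + 1) ≠ 0)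
    (hz : z (x + k + 1) = (b : ℂ) * psiFun g (x + k + 1) / g (x + k + 1)) :
    etaAux b g z k x = 0 := by
  have hfactor : -(g (x + k + 1) * z (x + k + 1)) + (b : ℂ) * psiFun g (x + k + 1) = 0 := by
    rw [hz]; field_simp; ring
  rw [etaAux, hfactor, mul_zero]

section Vanishing

variable {N : ℕ} {b : ℝ} {g z : ℝ → ℂ} {k : ℕ} {x : ℝ}

/- Beyond `N` the piece `γ_k` (resp. `η_k`) only reads `z` on `[N(1/b-1), 1]`
(resp. `[0, 1-N(1/b-1)]`), where `z` is chosen to kill its last factor. -/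
theorem gammaAux_eq_zero_of_lt (hc : 0 < 1 / b - 1) (hg : ∀ y ∈ Ioo (-1 : ℝ) 1, g y ≠ 0)
    (hz : ∀ y ∈ Icc ((N : ℝ) * (1 / b - 1)) 1, z y = -((b : ℂ) * psiFun g y / g (y - 1)))
    (hk : 1 ≤ k) (hNx : (N : ℝ) < x) (hx : x ∈ Icc ((k : ℝ) / b) (k + 1)) :
    gammaAux b g z k x = 0 := by
  have hk1 : (1 : ℝ) ≤ k := by exact_mod_cast hk
  have hNk : (N : ℝ) ≤ k := by
    have : N < k + 1 := by exact_mod_cast hNx.trans_le hx.2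
    exact_mod_cast Nat.lt_add_one_iff.mp this
  have hkx : (k : ℝ) * (1 / b - 1) ≤ x - k := by
    linarith [hx.1, show (k : ℝ) / b = k * (1 / b) by ring]
  have hNkc : (N : ℝ) * (1 / b - 1) ≤ k * (1 / b - 1) := mul_le_mul_of_nonneg_right hNk hc.le
  have hpos : 0 < x - k := by nlinarith
  exact gammaAux_eq_zero (hg _ ⟨by linarith, by linarith [hx.2]⟩)
    (hz _ ⟨hNkc.trans hkx, by linarith [hx.2]⟩)

theorem etaAux_eq_zero_of_lt_neg (hc : 0 < 1 / b - 1) (hg : ∀ y ∈ Ioo (-1 : ℝ) 1, g y ≠ 0)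
    (hz : ∀ y ∈ Icc 0 (1 - (N : ℝ) * (1 / b - 1)), z y = (b : ℂ) * psiFun g y / g y)
    (hk : 1 ≤ k) (hxN : x < -(N : ℝ)) (hx : x ∈ Icc (-(k : ℝ) - 1) (-(k : ℝ) / b)) :
    etaAux b g z k x = 0 := by
  have hk1 : (1 : ℝ) ≤ k := by exact_mod_cast hk
  have hNk : (N : ℝ) ≤ k := by
    have : N < k + 1 := by exact_mod_cast (show (N : ℝ) < k + 1 by linarith [hx.1])
    exact_mod_cast Nat.lt_add_one_iff.mp this
  have hkx : x + k + 1 ≤ 1 - k * (1 / b - 1) := by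
    linarith [hx.2, show -(k : ℝ) / b = -(k * (1 / b)) by ring]
  have hNkc : (N : ℝ) * (1 / b - 1) ≤ k * (1 / b - 1) := mul_le_mul_of_nonneg_right hNk hc.le
  have hlt : x + k + 1 < 1 := by nlinarith
  exact etaAux_eq_zero (hg _ ⟨by linarith [hx.1], hlt⟩) (hz _ ⟨by linarith [hx.1], by linarith⟩)

theorem hz_eq_zero_of_one_lt (hb : 0 < b) (hx : 1 < x)
    (hγ : ∀ k : ℕ, 1 ≤ k → x ∈ Icc ((k : ℝ) / b) (k + 1) → gammaAux b g z k x = 0) :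
    hz b g z x = 0 := by
  rw [hz, if_neg fun h => by linarith [h.2], if_neg fun h => by linarith [h.2]]
  split_ifs with hkγ hkη
  · obtain ⟨hk, -, hkx⟩ := hkγ.choose_spec
    rw [hγ _ hk hkx, map_zero]
  · obtain ⟨hk, -, hkx⟩ := hkη.choose_spec
    have : (0 : ℝ) ≤ hkη.choose / b := by positivity
    linarith [hkx.2, neg_div b (hkη.choose : ℝ)]
  · exact map_zero _

theorem hz_eq_zero_of_lt_neg_one (hb : 0 < b) (hx : x < -1)
    (hη : ∀ k : ℕ, 1 ≤ k → x ∈ Icc (-(k : ℝ) - 1) (-(k : ℝ) / b) → etaAux b g z k x = 0) :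
    hz b g z x = 0 := by
  rw [hz, if_neg fun h => by linarith [h.1], if_neg fun h => by linarith [h.1]]
  split_ifs with hkγ hkη
  · obtain ⟨-, -, hkx⟩ := hkγ.choose_spec
    have : (0 : ℝ) ≤ hkγ.choose / b := by positivity
    linarith [hkx.1]
  · obtain ⟨hk, -, hkx⟩ := hkη.choose_spec
    rw [hη _ hk hkx, map_zero]
  · exact map_zero _

end Vanishing

theorem statement15_general (n : ℕ) (N : ℕ) (hN : 0 < N) (b : ℝ)
    (hb : b ∈ Set.Ico ((N : ℝ) / ((N : ℝ) + 1)) ((2 * (N : ℝ)) / (2 * (N : ℝ) + 1)))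
    (g : ℝ → ℂ) (hg : Vplus n g) (z : ℝ → ℂ)
    (hz1 : ∀ x ∈ Set.Icc (0 : ℝ) (1 - (N : ℝ) * (1 / b - 1)),
      z x = (b : ℂ) * psiFun g x / g x)
    (hz3 : ∀ x ∈ Set.Icc ((N : ℝ) * (1 / b - 1)) 1,
      z x = -((b : ℂ) * psiFun g x / g (x - 1))) :
    tsupport (hz b g z) ⊆ Set.Icc (-(N : ℝ)) (N : ℝ) := by
  obtain ⟨hbN, hb2N⟩ := hb
  have hN1 : (1 : ℝ) ≤ N := by exact_mod_cast hN
  have hb0 : 0 < b := lt_of_lt_of_le (by positivity) hbN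
  have hb1 : b < 1 := hb2N.trans ((div_lt_one (by positivity)).2 (by linarith))
  have hc : 0 < 1 / b - 1 := sub_pos.2 (one_lt_one_div hb0 hb1)
  refine closure_minimal (fun x hx => ?_) isClosed_Icc
  by_contra hxN
  rw [mem_Icc, not_and_or, not_le, not_le] at hxN
  apply hx
  rcases hxN with hxN | hNx
  · exact hz_eq_zero_of_lt_neg_one hb0 (by linarith) fun k hk hkx =>
      etaAux_eq_zero_of_lt_neg hc hg.2.2 hz1 hk hxN hkx
  · exact hz_eq_zero_of_one_lt hb0 (by linarith) fun k hk hkx =>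
      gammaAux_eq_zero_of_lt hc hg.2.2 hz3 hk hNx hkx

/-- **Small support, part (a).** -/
theorem statement15 (n : ℕ) (N : ℕ) (hN : 0 < N) (b : ℝ)
    (hb : b ∈ Set.Ico ((N : ℝ) / ((N : ℝ) + 1)) ((2 * (N : ℝ)) / (2 * (N : ℝ) + 1)))
    (g : ℝ → ℂ) (hg : Vplus n g) (z : ℝ → ℂ) (hzmeas : Measurable z)
    (hz1 : ∀ x ∈ Set.Icc (0 : ℝ) (1 - (N : ℝ) * (1 / b - 1)),
      z x = (b : ℂ) * psiFun g x / g x)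
    (hz3 : ∀ x ∈ Set.Icc ((N : ℝ) * (1 / b - 1)) 1,
      z x = -((b : ℂ) * psiFun g x / g (x - 1))) :
    tsupport (hz b g z) ⊆ Set.Icc (-(N : ℝ)) (N : ℝ) :=
  statement15_general n N hN b hb g hg z hz1 hz3

end
end
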